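/- arXiv:1902.05707 — 2 statements merged into one kernel-verified Lean document; each statement's English description precedes it below -/
import Mathlib

section
/- Let σ : ℝ → ℝ, τ ∈ ℝ, r > 0 and M > 0 be such that σ is three times differentiable on [τ−r, τ+r], σ''(τ) > 0, |σ'''(x)| ≤ M for all x ∈ [τ−r, τ+r], and the symmetric function x ↦ σ(x+τ) + σ(−x+τ) is monotonically increasing for x ≥ 0. Define h(x,a) = (a²/σ''(τ))·(σ(x/a + τ) + σ(−x/a + τ) − 2σ(τ)). Given R > 0 and ν > 0, if a satisfies a ≥ 2R/r, a ≥ 8MR³/(3ν·σ''(τ)), and a ≥ 4MR/(3σ''(τ)), then: (i) h(x,a) ≥ 0 for all x; (ii) |h(x,a) − x²| < ν for all |x| ≤ 2R; and (iii) h(x,a) ≥ 4R² − ν for all |x| > 2R. -/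
/-!
Write `F y = σ (y + τ) + σ (-y + τ)`, so that `h x a = a² / σ''(τ) · (F (|x| / a) - F 0)`.
`F` is even with `F''(0) = 2σ''(τ)` and `|F'''| ≤ 2M` on `[0, r]`, while `F'''(0) = 0`; the last
fact makes the third-order Taylor bound strict: `|F y - F 0 - σ''(τ) y²| < M y³ / 3`.
For `|x| ≤ 2R` we have `|x| / a ≤ r`, and scaling gives `|h x a - x²| < M |x|³ / (3 a σ''(τ)) ≤ ν`.
Nonnegativity, and the bound for `|x| > 2R`, follow from the monotonicity of `F` on `[0, ∞)`.
-/

open Set Filter Topology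

theorem HasDerivAt.eventually_gt_right {f : ℝ → ℝ} {f' x : ℝ} (hf : HasDerivAt f f' x)
    (hf' : 0 < f') : ∀ᶠ t in 𝓝[>] x, f x < f t := by
  filter_upwards [(hasDerivAt_iff_tendsto_slope_left_right.mp hf).2.eventually
    (eventually_gt_nhds hf'), self_mem_nhdsWithin] with t hslope (ht : x < t)
  rw [slope_def_field, lt_div_iff₀ (sub_pos.mpr ht)] at hslope
  linarith

theorem monotoneOn_Icc_of_hasDerivAt_nonneg {f f' : ℝ → ℝ} {a b : ℝ}
    (hf : ∀ t ∈ Icc a b, HasDerivAt f (f' t) t) (hf' : ∀ t ∈ Icc a b, 0 ≤ f' t) :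
    MonotoneOn f (Icc a b) := by
  refine monotoneOn_of_hasDerivWithinAt_nonneg (f' := f') (convex_Icc a b)
    (fun t ht ↦ (hf t ht).continuousAt.continuousWithinAt) (fun t ht ↦ ?_) (fun t ht ↦ ?_)
  all_goals rw [interior_Icc] at ht
  · exact (hf t (Ioo_subset_Icc_self ht)).hasDerivWithinAt
  · exact hf' t (Ioo_subset_Icc_self ht)

theorem lt_of_hasDerivAt_nonneg_of_eventually_pos {f f' : ℝ → ℝ} {a b : ℝ}
    (hf : ∀ t ∈ Icc a b, HasDerivAt f (f' t) t) (hf' : ∀ t ∈ Icc a b, 0 ≤ f' t)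
    (hpos : ∀ᶠ t in 𝓝[>] a, 0 < f' t) : ∀ y ∈ Ioc a b, f a < f y := by
  intro y ⟨hay, hyb⟩
  obtain ⟨u, hau, hu⟩ := mem_nhdsGT_iff_exists_Ioo_subset.mp hpos
  set d := min u y
  have had : a < d := lt_min hau hay
  have hdy : d ≤ y := min_le_right u y
  obtain ⟨ξ, hξ, hslope⟩ := exists_hasDerivAt_eq_slope f f' had
    (fun t ht ↦ (hf t ⟨ht.1, ht.2.trans (hdy.trans hyb)⟩).continuousAt.continuousWithinAt)
    (fun t ht ↦ hf t ⟨ht.1.le, ht.2.le.trans (hdy.trans hyb)⟩)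
  have hfd : f a < f d := by
    have : 0 < f' ξ := hu ⟨hξ.1, hξ.2.trans_le (min_le_left u y)⟩
    rw [hslope, lt_div_iff₀ (sub_pos.mpr had)] at this
    linarith
  exact hfd.trans_le (monotoneOn_Icc_of_hasDerivAt_nonneg hf hf'
    ⟨had.le, hdy.trans hyb⟩ ⟨hay.le, hyb⟩ hdy)

theorem sub_taylor_lt_of_third_deriv_le {F F₁ F₂ F₃ : ℝ → ℝ} {r B : ℝ}
    (hF : ∀ t ∈ Icc 0 r, HasDerivAt F (F₁ t) t) (hF₁ : ∀ t ∈ Icc 0 r, HasDerivAt F₁ (F₂ t) t)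
    (hF₂ : ∀ t ∈ Icc 0 r, HasDerivAt F₂ (F₃ t) t) (hle : ∀ t ∈ Icc 0 r, F₃ t ≤ B)
    (hlt : F₃ 0 < B) :
    ∀ y ∈ Ioc 0 r, F y - (F 0 + F₁ 0 * y + F₂ 0 / 2 * y ^ 2) < B / 6 * y ^ 3 := by
  intro y hy
  have hr : 0 < r := hy.1.trans_le hy.2
  -- To show `G = B t³/6 - (Taylor remainder) > 0`: `G''' = B - F₃ ≥ 0` and `G'''(0) > 0` make
  -- `G''` positive just right of `0`, and this strict positivity is integrated twice.
  set G₂ : ℝ → ℝ := fun t ↦ B * t - (F₂ t - F₂ 0)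
  set G₁ : ℝ → ℝ := fun t ↦ B / 2 * t ^ 2 - (F₁ t - F₁ 0 - F₂ 0 * t)
  set G : ℝ → ℝ := fun t ↦ B / 6 * t ^ 3 - (F t - (F 0 + F₁ 0 * t + F₂ 0 / 2 * t ^ 2))
  have hG₂ : ∀ t ∈ Icc 0 r, HasDerivAt G₂ (B - F₃ t) t := fun t ht ↦
    (((hasDerivAt_id t).const_mul B).sub ((hF₂ t ht).sub_const (F₂ 0))).congr_deriv (by simp)
  have hG₁ : ∀ t ∈ Icc 0 r, HasDerivAt G₁ (G₂ t) t := fun t ht ↦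
    (((hasDerivAt_pow 2 t).const_mul (B / 2)).sub (((hF₁ t ht).sub_const (F₁ 0)).sub
      ((hasDerivAt_id t).const_mul (F₂ 0)))).congr_deriv (by simp [G₂]; ring)
  have hG : ∀ t ∈ Icc 0 r, HasDerivAt G (G₁ t) t := fun t ht ↦
    (((hasDerivAt_pow 3 t).const_mul (B / 6)).sub ((hF t ht).sub
      ((((hasDerivAt_id t).const_mul (F₁ 0)).const_add (F 0)).add
        ((hasDerivAt_pow 2 t).const_mul (F₂ 0 / 2))))).congr_deriv (by simp [G₁]; ring)
  have hG₂_nonneg : ∀ t ∈ Icc 0 r, 0 ≤ G₂ t := fun t ht ↦ by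
    simpa [G₂] using monotoneOn_Icc_of_hasDerivAt_nonneg hG₂
      (fun t ht ↦ sub_nonneg.mpr (hle t ht)) (left_mem_Icc.mpr hr.le) ht ht.1
  have hG₂_pos : ∀ᶠ t in 𝓝[>] 0, 0 < G₂ t := by
    simpa [G₂] using (hG₂ 0 (left_mem_Icc.mpr hr.le)).eventually_gt_right (sub_pos.mpr hlt)
  have hG₁_pos : ∀ t ∈ Ioc 0 r, 0 < G₁ t := by
    simpa [G₁] using lt_of_hasDerivAt_nonneg_of_eventually_pos hG₁ hG₂_nonneg hG₂_pos
  have hG₁_nonneg : ∀ t ∈ Icc 0 r, 0 ≤ G₁ t := fun t ht ↦ by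
    rcases ht.1.eq_or_lt with rfl | h
    · simp [G₁]
    · exact (hG₁_pos t ⟨h, ht.2⟩).le
  have hG₁_eventually_pos : ∀ᶠ t in 𝓝[>] 0, 0 < G₁ t :=
    mem_of_superset (Ioc_mem_nhdsGT hr) hG₁_pos
  have := lt_of_hasDerivAt_nonneg_of_eventually_pos hG hG₁_nonneg hG₁_eventually_pos y hy
  simp only [G] at this
  linarith

theorem abs_sub_taylor_lt_of_abs_third_deriv_le {F F₁ F₂ F₃ : ℝ → ℝ} {r B : ℝ}
    (hF : ∀ t ∈ Icc 0 r, HasDerivAt F (F₁ t) t) (hF₁ : ∀ t ∈ Icc 0 r, HasDerivAt F₁ (F₂ t) t)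
    (hF₂ : ∀ t ∈ Icc 0 r, HasDerivAt F₂ (F₃ t) t) (hle : ∀ t ∈ Icc 0 r, |F₃ t| ≤ B)
    (hlt : |F₃ 0| < B) :
    ∀ y ∈ Ioc 0 r, |F y - (F 0 + F₁ 0 * y + F₂ 0 / 2 * y ^ 2)| < B / 6 * y ^ 3 := by
  intro y hy
  have hupper := sub_taylor_lt_of_third_deriv_le hF hF₁ hF₂ (fun t ht ↦ (abs_le.mp (hle t ht)).2)
    (abs_lt.mp hlt).2 y hy
  have hlower := sub_taylor_lt_of_third_deriv_le (fun t ht ↦ (hF t ht).neg)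
    (fun t ht ↦ (hF₁ t ht).neg) (fun t ht ↦ (hF₂ t ht).neg)
    (fun t ht ↦ neg_le.mp (abs_le.mp (hle t ht)).1) (neg_lt.mp (abs_lt.mp hlt).1) y hy
  simp only [Pi.neg_apply] at hlower
  rw [abs_lt]
  constructor <;> linarith

def reflSum (g : ℝ → ℝ) (τ y : ℝ) : ℝ := g (y + τ) + g (-y + τ)

def reflDiff (g : ℝ → ℝ) (τ y : ℝ) : ℝ := g (y + τ) - g (-y + τ)

theorem reflSum_abs (g : ℝ → ℝ) (τ y : ℝ) : reflSum g τ |y| = reflSum g τ y := by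
  rcases abs_choice y with h | h <;> simp only [reflSum, h, neg_neg]
  rw [add_comm]

theorem hasDerivAt_reflSum {g g' : ℝ → ℝ} {τ y : ℝ} (hplus : HasDerivAt g (g' (y + τ)) (y + τ))
    (hminus : HasDerivAt g (g' (-y + τ)) (-y + τ)) :
    HasDerivAt (reflSum g τ) (reflDiff g' τ y) y := by
  have := (hplus.comp y ((hasDerivAt_id y).add_const τ)).add
    (hminus.comp y ((hasDerivAt_id y).neg.add_const τ))
  exact this.congr_deriv (by simp [reflDiff]; ring)

theorem hasDerivAt_reflDiff {g g' : ℝ → ℝ} {τ y : ℝ} (hplus : HasDerivAt g (g' (y + τ)) (y + τ))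
    (hminus : HasDerivAt g (g' (-y + τ)) (-y + τ)) :
    HasDerivAt (reflDiff g τ) (reflSum g' τ y) y := by
  have := (hplus.comp y ((hasDerivAt_id y).add_const τ)).sub
    (hminus.comp y ((hasDerivAt_id y).neg.add_const τ))
  exact this.congr_deriv (by simp [reflSum])

theorem abs_reflSum_sub_quadratic_lt {σ σ' σ'' σ''' : ℝ → ℝ} {τ r M : ℝ} (hM : 0 < M)
    (hder1 : ∀ x ∈ Icc (τ - r) (τ + r), HasDerivAt σ (σ' x) x)
    (hder2 : ∀ x ∈ Icc (τ - r) (τ + r), HasDerivAt σ' (σ'' x) x)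
    (hder3 : ∀ x ∈ Icc (τ - r) (τ + r), HasDerivAt σ'' (σ''' x) x)
    (hbd3 : ∀ x ∈ Icc (τ - r) (τ + r), |σ''' x| ≤ M) :
    ∀ y ∈ Ioc 0 r, |reflSum σ τ y - reflSum σ τ 0 - σ'' τ * y ^ 2| < M / 3 * y ^ 3 := by
  have hplus : ∀ t ∈ Icc 0 r, t + τ ∈ Icc (τ - r) (τ + r) := fun t ht ↦
    ⟨by linarith [ht.1, ht.2], by linarith [ht.2]⟩
  have hminus : ∀ t ∈ Icc 0 r, -t + τ ∈ Icc (τ - r) (τ + r) := fun t ht ↦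
    ⟨by linarith [ht.2], by linarith [ht.1, ht.2]⟩
  intro y hy
  have := abs_sub_taylor_lt_of_abs_third_deriv_le (B := 2 * M)
    (fun t ht ↦ hasDerivAt_reflSum (hder1 _ (hplus t ht)) (hder1 _ (hminus t ht)))
    (fun t ht ↦ hasDerivAt_reflDiff (hder2 _ (hplus t ht)) (hder2 _ (hminus t ht)))
    (fun t ht ↦ hasDerivAt_reflSum (hder3 _ (hplus t ht)) (hder3 _ (hminus t ht)))
    (fun t ht ↦ (abs_sub _ _).trans (by linarith [hbd3 _ (hplus t ht), hbd3 _ (hminus t ht)]))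
    (by simpa [reflDiff] using hM) y hy
  convert this using 2
  · simp [reflSum, reflDiff]; ring
  · ring

theorem abs_sq_div_mul_sub_sq_lt {F : ℝ → ℝ} {c M r a R ν : ℝ} (hc : 0 < c) (hM : 0 ≤ M)
    (hν : 0 < ν) (ha : 0 < a) (hF : ∀ y ∈ Ioc 0 r, |F y - F 0 - c * y ^ 2| < M / 3 * y ^ 3)
    (har : 2 * R ≤ a * r) (haν : 8 * M * R ^ 3 / (3 * ν * c) ≤ a) {x : ℝ}
    (hx : x ∈ Icc 0 (2 * R)) : |a ^ 2 / c * (F (x / a) - F 0) - x ^ 2| < ν := by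
  rcases hx.1.eq_or_lt with rfl | hx0
  · simpa using hν
  have hy : x / a ∈ Ioc 0 r := ⟨div_pos hx0 ha, (div_le_iff₀ ha).mpr (by linarith [hx.2])⟩
  have hsplit : a ^ 2 / c * (F (x / a) - F 0) - x ^ 2
      = a ^ 2 / c * (F (x / a) - F 0 - c * (x / a) ^ 2) := by
    field_simp
  calc |a ^ 2 / c * (F (x / a) - F 0) - x ^ 2|
      = a ^ 2 / c * |F (x / a) - F 0 - c * (x / a) ^ 2| := by
        rw [hsplit, abs_mul, abs_of_pos (by positivity)]
    _ < a ^ 2 / c * (M / 3 * (x / a) ^ 3) := by gcongr; exact hF _ hy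
    _ = M * x ^ 3 / (3 * a * c) := by field_simp
    _ ≤ M * (2 * R) ^ 3 / (3 * a * c) := by gcongr; exact hx.2
    _ ≤ ν := by
        rw [div_le_iff₀ (by positivity)]
        have := (div_le_iff₀ (by positivity : 0 < 3 * ν * c)).mp haν
        nlinarith

theorem stmt3_general (σ σ' σ'' σ''' : ℝ → ℝ) (τ r M : ℝ) (hr : 0 < r) (hM : 0 < M)
    (hder1 : ∀ x ∈ Set.Icc (τ - r) (τ + r), HasDerivAt σ (σ' x) x)
    (hder2 : ∀ x ∈ Set.Icc (τ - r) (τ + r), HasDerivAt σ' (σ'' x) x)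
    (hder3 : ∀ x ∈ Set.Icc (τ - r) (τ + r), HasDerivAt σ'' (σ''' x) x)
    (hcurv : 0 < σ'' τ)
    (hbd3 : ∀ x ∈ Set.Icc (τ - r) (τ + r), |σ''' x| ≤ M)
    (hmono : ∀ x y : ℝ, 0 ≤ x → x ≤ y →
      σ (x + τ) + σ (-x + τ) ≤ σ (y + τ) + σ (-y + τ))
    (h : ℝ → ℝ → ℝ)
    (hh : ∀ x b : ℝ, h x b = b ^ 2 / σ'' τ * (σ (x / b + τ) + σ (-x / b + τ) - 2 * σ τ))
    (R ν a : ℝ) (hR : 0 < R) (hν : 0 < ν)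
    (ha1 : a ≥ 2 * R / r)
    (ha2 : a ≥ 8 * M * R ^ 3 / (3 * ν * σ'' τ)) :
    (∀ x : ℝ, 0 ≤ h x a) ∧
    (∀ x : ℝ, |x| ≤ 2 * R → |h x a - x ^ 2| < ν) ∧
    (∀ x : ℝ, |x| > 2 * R → h x a ≥ 4 * R ^ 2 - ν) := by
  have ha : 0 < a := (div_pos (by positivity) hr).trans_le ha1
  have har : 2 * R ≤ a * r := by rwa [ge_iff_le, div_le_iff₀ hr] at ha1
  have hh_reflSum : ∀ x, h x a = a ^ 2 / σ'' τ * (reflSum σ τ (|x| / a) - reflSum σ τ 0) :=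
    fun x ↦ by
      rw [hh, ← abs_of_pos ha, ← abs_div, reflSum_abs, abs_of_pos ha]
      simp only [reflSum, neg_div, neg_zero, zero_add]
      ring
  have happrox : ∀ x, |x| ≤ 2 * R → |h x a - x ^ 2| < ν := fun x hx ↦ by
    rw [hh_reflSum, ← sq_abs x]
    exact abs_sq_div_mul_sub_sq_lt hcurv hM.le hν ha
      (abs_reflSum_sub_quadratic_lt hM hder1 hder2 hder3 hbd3) har ha2 ⟨abs_nonneg x, hx⟩
  refine ⟨fun x ↦ ?_, happrox, fun x hx ↦ ?_⟩
  · rw [hh_reflSum]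
    exact mul_nonneg (by positivity) (sub_nonneg.mpr (hmono 0 _ le_rfl (by positivity)))
  · have hmono_h : h (2 * R) a ≤ h x a := by
      rw [hh_reflSum, hh_reflSum, abs_of_pos (by positivity : 0 < 2 * R)]
      gcongr
      exact hmono _ _ (by positivity) (by gcongr)
    linarith [(abs_lt.mp (happrox (2 * R) (abs_of_pos (by positivity : 0 < 2 * R)).le)).1]

/-- Lemma 5 (first-layer supernode): the two-node supernode
`h(x,a) = (a²/σ''(τ))·(σ(x/a+τ) + σ(−x/a+τ) − 2σ(τ))` built from an activation `σ`
with positive curvature at `τ`, bounded third derivative near `τ`, and symmetric-sum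
monotonicity, approximates `x²` with accuracy `ν` on `|x| ≤ 2R`, is non-negative, and is
at least `4R² − ν` for `|x| > 2R`, provided `a` is large enough. -/
theorem stmt3 (σ σ' σ'' σ''' : ℝ → ℝ) (τ r M : ℝ) (hr : 0 < r) (hM : 0 < M)
    (hder1 : ∀ x ∈ Set.Icc (τ - r) (τ + r), HasDerivAt σ (σ' x) x)
    (hder2 : ∀ x ∈ Set.Icc (τ - r) (τ + r), HasDerivAt σ' (σ'' x) x)
    (hder3 : ∀ x ∈ Set.Icc (τ - r) (τ + r), HasDerivAt σ'' (σ''' x) x)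
    (hcurv : 0 < σ'' τ)
    (hbd3 : ∀ x ∈ Set.Icc (τ - r) (τ + r), |σ''' x| ≤ M)
    (hmono : ∀ x y : ℝ, 0 ≤ x → x ≤ y →
      σ (x + τ) + σ (-x + τ) ≤ σ (y + τ) + σ (-y + τ))
    (h : ℝ → ℝ → ℝ)
    (hh : ∀ x b : ℝ, h x b = b ^ 2 / σ'' τ * (σ (x / b + τ) + σ (-x / b + τ) - 2 * σ τ))
    (R ν a : ℝ) (hR : 0 < R) (hν : 0 < ν)
    (ha1 : a ≥ 2 * R / r)
    (ha2 : a ≥ 8 * M * R ^ 3 / (3 * ν * σ'' τ))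
    (ha3 : a ≥ 4 * M * R / (3 * σ'' τ)) :
    (∀ x : ℝ, 0 ≤ h x a) ∧
    (∀ x : ℝ, |x| ≤ 2 * R → |h x a - x ^ 2| < ν) ∧
    (∀ x : ℝ, |x| > 2 * R → h x a ≥ 4 * R ^ 2 - ν) :=
  stmt3_general σ σ' σ'' σ''' τ r M hr hM hder1 hder2 hder3 hcurv hbd3 hmono h hh R ν a hR hν ha1
    ha2
end

section
/- Let σ, τ, r, M, h(x,a), R > 0 and ν > 0 be as follows: σ is three times differentiable on [τ−r, τ+r] with σ''(τ) > 0 and |σ'''| ≤ M there, x ↦ σ(x+τ) + σ(−x+τ) is monotonically increasing for x ≥ 0, h(x,a) = (a²/σ''(τ))·(σ(x/a+τ) + σ(−x/a+τ) − 2σ(τ)), and a ≥ max(2R/r, 8MR³/(3ν·σ''(τ)), 4MR/(3σ''(τ))). Define ĝ(x) = Σ_{i=1}^n h(x_i, a) for x ∈ ℝⁿ, and g(x) = Σ_{i=1}^n x_i². Then: (i) ĝ(x) ≥ 0 for all x; (ii) |ĝ(x) − g(x)| ≤ n·ν whenever g(x) ≤ 4R²; and (iii) ĝ(x) ≥ 4R²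 − n·ν whenever g(x) > 4R². -/
/-!
Expanding σ to third order at τ, the odd terms cancel in the symmetric second difference, so
`σ(s+τ) + σ(-s+τ) - 2σ(τ) = σ''(τ) s² + E(s)` with `|E(s)| ≤ M s³/3` for `0 ≤ s ≤ r`. Rescaling by
`s = |x|/a` gives `|h(x,a) - x²| ≤ M|x|³/(3σ''(τ)a) ≤ ν` for `|x| ≤ 2R`, by the choice of `a`. If
`g(x) ≤ 4R²` every coordinate has `|xᵢ| ≤ 2R`, which gives (ii). Since `h(·,a)` is even and increasing
on `[0,∞)`, it is nonnegative and `h(xᵢ,a) ≥ min(xᵢ², 4R²) - ν`; when `g(x) > 4R²` the truncated squares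
still sum to at least `4R²`, which gives (iii).
-/

open Set Finset

lemma abs_le_div_mul_pow_succ_of_hasDerivAt {E E' : ℝ → ℝ} {r K : ℝ} (k : ℕ)
    (hE : ∀ s ∈ Icc 0 r, HasDerivAt E (E' s) s) (hE0 : E 0 = 0)
    (hE' : ∀ s ∈ Icc 0 r, |E' s| ≤ K * s ^ k) :
    ∀ s ∈ Icc 0 r, |E s| ≤ K / (k + 1) * s ^ (k + 1) := by
  have hB (t : ℝ) : HasDerivAt (fun t => K / (k + 1) * t ^ (k + 1)) (K * t ^ k) t := by
    refine ((hasDerivAt_pow (k + 1) t).const_mul (K / (k + 1))).congr_deriv ?_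
    push_cast
    field_simp
  exact image_norm_le_of_norm_deriv_right_le_deriv_boundary
    (fun t ht => (hE t ht).continuousAt.continuousWithinAt)
    (fun t ht => (hE t (Ico_subset_Icc_self ht)).hasDerivWithinAt)
    (by simp [hE0]) hB (fun t ht => hE' t (Ico_subset_Icc_self ht))

section SymmetricDifference

variable {f f' : ℝ → ℝ} {s τ : ℝ}

lemma hasDerivAt_add_comp_neg (hp : HasDerivAt f (f' (s + τ)) (s + τ))
    (hm : HasDerivAt f (f' (-s + τ)) (-s + τ)) :
    HasDerivAt (fun t => f (t + τ) + f (-t + τ)) (f' (s + τ) - f' (-s + τ)) s :=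
  (hp.comp_add_const.add (hm.comp s ((hasDerivAt_neg s).add_const τ))).congr_deriv (by ring)

lemma hasDerivAt_sub_comp_neg (hp : HasDerivAt f (f' (s + τ)) (s + τ))
    (hm : HasDerivAt f (f' (-s + τ)) (-s + τ)) :
    HasDerivAt (fun t => f (t + τ) - f (-t + τ)) (f' (s + τ) + f' (-s + τ)) s :=
  (hp.comp_add_const.sub (hm.comp s ((hasDerivAt_neg s).add_const τ))).congr_deriv (by ring)

end SymmetricDifference

def symmSecondDiff (σ : ℝ → ℝ) (τ s : ℝ) : ℝ := σ (s + τ) + σ (-s + τ) - 2 * σ τ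

lemma symmSecondDiff_neg (σ : ℝ → ℝ) (τ s : ℝ) :
    symmSecondDiff σ τ (-s) = symmSecondDiff σ τ s := by
  rw [symmSecondDiff, symmSecondDiff, neg_neg, add_comm (σ _)]

lemma symmSecondDiff_zero (σ : ℝ → ℝ) (τ : ℝ) : symmSecondDiff σ τ 0 = 0 := by
  simp only [symmSecondDiff, neg_zero, zero_add]; ring

lemma abs_symmSecondDiff_sub_le {σ σ' σ'' σ''' : ℝ → ℝ} {τ r M : ℝ}
    (hder1 : ∀ x ∈ Icc (τ - r) (τ + r), HasDerivAt σ (σ' x) x)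
    (hder2 : ∀ x ∈ Icc (τ - r) (τ + r), HasDerivAt σ' (σ'' x) x)
    (hder3 : ∀ x ∈ Icc (τ - r) (τ + r), HasDerivAt σ'' (σ''' x) x)
    (hbd3 : ∀ x ∈ Icc (τ - r) (τ + r), |σ''' x| ≤ M) :
    ∀ s ∈ Icc 0 r, |symmSecondDiff σ τ s - σ'' τ * s ^ 2| ≤ M / 3 * s ^ 3 := by
  -- the error and its first two derivatives vanish at 0, and its third derivative is bounded by 2M
  have hp : ∀ s ∈ Icc 0 r, s + τ ∈ Icc (τ - r) (τ + r) := fun s ⟨h0, hr⟩ =>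
    ⟨by linarith, by linarith⟩
  have hm : ∀ s ∈ Icc 0 r, -s + τ ∈ Icc (τ - r) (τ + r) := fun s ⟨h0, hr⟩ =>
    ⟨by linarith, by linarith⟩
  have h2 := abs_le_div_mul_pow_succ_of_hasDerivAt (K := 2 * M) 0
    (E := fun s => σ'' (s + τ) + σ'' (-s + τ) - 2 * σ'' τ)
    (fun s hs => (hasDerivAt_add_comp_neg (hder3 _ (hp s hs)) (hder3 _ (hm s hs))).sub_const _)
    (by simp only [neg_zero, zero_add]; ring)
    (fun s hs => by
      rw [pow_zero, mul_one, two_mul]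
      exact (abs_sub _ _).trans (add_le_add (hbd3 _ (hp s hs)) (hbd3 _ (hm s hs))))
  have h1 := abs_le_div_mul_pow_succ_of_hasDerivAt 1
    (E := fun s => σ' (s + τ) - σ' (-s + τ) - 2 * σ'' τ * s)
    (fun s hs => ((hasDerivAt_sub_comp_neg (hder2 _ (hp s hs)) (hder2 _ (hm s hs))).sub
      ((hasDerivAt_id s).const_mul _)).congr_deriv (by ring))
    (by simp) h2
  have h0 := abs_le_div_mul_pow_succ_of_hasDerivAt 2
    (E := fun s => symmSecondDiff σ τ s - σ'' τ * s ^ 2)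
    (fun s hs => (((hasDerivAt_add_comp_neg (hder1 _ (hp s hs)) (hder1 _ (hm s hs))).sub_const _).sub
      ((hasDerivAt_pow 2 s).const_mul _)).congr_deriv (by push_cast; ring))
    (by simp [symmSecondDiff_zero]) h1
  intro s hs
  exact (h0 s hs).trans_eq (by norm_num)

noncomputable def supernode (σ : ℝ → ℝ) (τ c a x : ℝ) : ℝ := a ^ 2 / c * symmSecondDiff σ τ (x / a)

section Supernode

variable {σ : ℝ → ℝ} {τ c a : ℝ}

lemma supernode_abs (x : ℝ) : supernode σ τ c a |x| = supernode σ τ c a x := by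
  rcases abs_cases x with ⟨hx, -⟩ | ⟨hx, -⟩
  · rw [hx]
  · rw [hx, supernode, supernode, neg_div, symmSecondDiff_neg]

lemma supernode_monotoneOn (hc : 0 ≤ c) (ha : 0 < a)
    (hmono : MonotoneOn (symmSecondDiff σ τ) (Ici 0)) :
    MonotoneOn (supernode σ τ c a) (Ici 0) := fun x hx y hy hxy =>
  mul_le_mul_of_nonneg_left
    (hmono (div_nonneg hx ha.le) (div_nonneg hy ha.le) (div_le_div_of_nonneg_right hxy ha.le))
    (by positivity)

lemma supernode_nonneg (hc : 0 ≤ c) (ha : 0 < a)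
    (hmono : MonotoneOn (symmSecondDiff σ τ) (Ici 0)) (x : ℝ) : 0 ≤ supernode σ τ c a x := by
  have h0 : supernode σ τ c a 0 = 0 := by rw [supernode, zero_div, symmSecondDiff_zero, mul_zero]
  rw [← supernode_abs, ← h0]
  exact supernode_monotoneOn hc ha hmono self_mem_Ici (abs_nonneg x) (abs_nonneg x)

lemma abs_supernode_sub_sq_le {r M x : ℝ} (hc : 0 < c) (ha : 0 < a)
    (htaylor : ∀ s ∈ Icc 0 r, |symmSecondDiff σ τ s - c * s ^ 2| ≤ M / 3 * s ^ 3)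
    (hx : |x| ≤ r * a) :
    |supernode σ τ c a x - x ^ 2| ≤ M * |x| ^ 3 / (3 * c * a) := by
  have hs : |x| / a ∈ Icc 0 r := ⟨by positivity, (div_le_iff₀ ha).2 hx⟩
  have hexpand : supernode σ τ c a x - x ^ 2 =
      a ^ 2 / c * (symmSecondDiff σ τ (|x| / a) - c * (|x| / a) ^ 2) := by
    rw [← supernode_abs, supernode, div_pow, sq_abs]
    field_simp
  rw [hexpand, abs_mul, abs_of_pos (by positivity)]
  calc a ^ 2 / c * |symmSecondDiff σ τ (|x| / a) - c * (|x| / a) ^ 2|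
      ≤ a ^ 2 / c * (M / 3 * (|x| / a) ^ 3) := by gcongr; exact htaylor _ hs
    _ = M * |x| ^ 3 / (3 * c * a) := by field_simp

end Supernode

section SumOfSquares

variable {ι : Type*} [Fintype ι] {f : ℝ → ℝ} {ρ ν : ℝ}

lemma abs_sum_sub_sum_sq_le (hf : ∀ t, |t| ≤ ρ → |f t - t ^ 2| ≤ ν) (hρ : 0 ≤ ρ) {x : ι → ℝ}
    (hx : ∑ i, x i ^ 2 ≤ ρ ^ 2) :
    |∑ i, f (x i) - ∑ i, x i ^ 2| ≤ Fintype.card ι * ν := by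
  have hxi (i : ι) : |x i| ≤ ρ :=
    abs_le_of_sq_le_sq ((single_le_sum (fun j _ => sq_nonneg (x j)) (mem_univ i)).trans hx) hρ
  rw [← sum_sub_distrib]
  calc |∑ i, (f (x i) - x i ^ 2)| ≤ ∑ i, |f (x i) - x i ^ 2| := abs_sum_le_sum_abs _ _
    _ ≤ ∑ _i : ι, ν := sum_le_sum fun i _ => hf _ (hxi i)
    _ = Fintype.card ι * ν := by rw [sum_const, card_univ, nsmul_eq_mul]

lemma min_sq_sub_le (hf : ∀ t, |t| ≤ ρ → |f t - t ^ 2| ≤ ν) (hρ : 0 ≤ ρ)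
    (hf_abs : ∀ t, f |t| = f t) (hmono : MonotoneOn f (Ici 0)) (t : ℝ) :
    min (t ^ 2) (ρ ^ 2) - ν ≤ f t := by
  by_cases ht : |t| ≤ ρ
  · linarith [(abs_le.1 (hf t ht)).1, min_le_left (t ^ 2) (ρ ^ 2)]
  · have hρ_approx := (abs_le.1 (hf ρ (abs_of_nonneg hρ).le)).1
    have hρ_le : f ρ ≤ f t := hf_abs t ▸ hmono hρ (abs_nonneg t) (not_le.1 ht).le
    linarith [min_le_right (t ^ 2) (ρ ^ 2)]

lemma le_sum_min {κ : Type*} {s : Finset κ} {g : κ → ℝ} {c : ℝ} (hc : 0 ≤ c)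
    (hg : ∀ i ∈ s, 0 ≤ g i) (hsum : c ≤ ∑ i ∈ s, g i) : c ≤ ∑ i ∈ s, min (g i) c := by
  by_cases hall : ∀ i ∈ s, g i ≤ c
  · rwa [sum_congr rfl fun i hi => min_eq_left (hall i hi)]
  · simp only [not_forall, not_le] at hall
    obtain ⟨j, hj, hcj⟩ := hall
    calc c = min (g j) c := (min_eq_right hcj.le).symm
      _ ≤ ∑ i ∈ s, min (g i) c := single_le_sum (fun i hi => le_min (hg i hi) hc) hj

lemma sq_sub_le_sum (hf : ∀ t, |t| ≤ ρ → |f t - t ^ 2| ≤ ν) (hρ : 0 ≤ ρ)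
    (hf_abs : ∀ t, f |t| = f t) (hmono : MonotoneOn f (Ici 0)) {x : ι → ℝ}
    (hx : ρ ^ 2 ≤ ∑ i, x i ^ 2) :
    ρ ^ 2 - Fintype.card ι * ν ≤ ∑ i, f (x i) := by
  have hmin := le_sum_min (sq_nonneg ρ) (fun i _ => sq_nonneg (x i)) hx
  calc ρ ^ 2 - Fintype.card ι * ν ≤ ∑ i, (min (x i ^ 2) (ρ ^ 2) - ν) := by
        rw [sum_sub_distrib, sum_const, card_univ, nsmul_eq_mul]; linarith
    _ ≤ ∑ i, f (x i) := sum_le_sum fun i _ => min_sq_sub_le hf hρ hf_abs hmono (x i)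

end SumOfSquares

theorem stmt4_general (n : ℕ) (σ σ' σ'' σ''' : ℝ → ℝ) (τ r M : ℝ) (hr : 0 < r)
    (hder1 : ∀ x ∈ Set.Icc (τ - r) (τ + r), HasDerivAt σ (σ' x) x)
    (hder2 : ∀ x ∈ Set.Icc (τ - r) (τ + r), HasDerivAt σ' (σ'' x) x)
    (hder3 : ∀ x ∈ Set.Icc (τ - r) (τ + r), HasDerivAt σ'' (σ''' x) x)
    (hcurv : 0 < σ'' τ)
    (hbd3 : ∀ x ∈ Set.Icc (τ - r) (τ + r), |σ''' x| ≤ M)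
    (hmono : ∀ x y : ℝ, 0 ≤ x → x ≤ y →
      σ (x + τ) + σ (-x + τ) ≤ σ (y + τ) + σ (-y + τ))
    (h : ℝ → ℝ → ℝ)
    (hh : ∀ x b : ℝ, h x b = b ^ 2 / σ'' τ * (σ (x / b + τ) + σ (-x / b + τ) - 2 * σ τ))
    (R ν a : ℝ) (hR : 0 < R) (hν : 0 < ν)
    (ha1 : a ≥ 2 * R / r)
    (ha2 : a ≥ 8 * M * R ^ 3 / (3 * ν * σ'' τ))
    (g ghat : (Fin n → ℝ) → ℝ)
    (hg : ∀ x, g x = ∑ i, (x i) ^ 2)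
    (hghat : ∀ x, ghat x = ∑ i, h (x i) a) :
    (∀ x : Fin n → ℝ, 0 ≤ ghat x) ∧
    (∀ x : Fin n → ℝ, g x ≤ 4 * R ^ 2 → |ghat x - g x| ≤ n * ν) ∧
    (∀ x : Fin n → ℝ, g x > 4 * R ^ 2 → ghat x ≥ 4 * R ^ 2 - n * ν) := by
  have ha : 0 < a := (by positivity : 0 < 2 * R / r).trans_le ha1
  have hM : 0 ≤ M := (abs_nonneg _).trans (hbd3 τ ⟨by linarith, by linarith⟩)
  have hh' (t : ℝ) : h t a = supernode σ τ (σ'' τ) a t := by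
    rw [hh, supernode, symmSecondDiff, neg_div]
  have hmono' : MonotoneOn (symmSecondDiff σ τ) (Ici 0) := fun x hx y _ hxy => by
    simp only [symmSecondDiff]
    linarith [hmono x y hx hxy]
  have happrox (t : ℝ) (ht : |t| ≤ 2 * R) : |supernode σ τ (σ'' τ) a t - t ^ 2| ≤ ν := by
    have hRa : 2 * R ≤ r * a := by rw [ge_iff_le, div_le_iff₀ hr] at ha1; linarith
    have hνa : 8 * M * R ^ 3 ≤ ν * (3 * σ'' τ * a) := by
      rw [ge_iff_le, div_le_iff₀ (by positivity)] at ha2; linarith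
    refine (abs_supernode_sub_sq_le hcurv ha (abs_symmSecondDiff_sub_le hder1 hder2 hder3 hbd3)
      (ht.trans hRa)).trans ((div_le_iff₀ (by positivity)).2 ?_)
    calc M * |t| ^ 3 ≤ M * (2 * R) ^ 3 := by gcongr
      _ ≤ ν * (3 * σ'' τ * a) := by linarith
  have h4R : 4 * R ^ 2 = (2 * R) ^ 2 := by ring
  simp only [hghat, hg, hh', h4R]
  refine ⟨fun x => sum_nonneg fun i _ => supernode_nonneg hcurv.le ha hmono' (x i),
    fun x hx => ?_, fun x hx => ?_⟩
  · simpa only [Fintype.card_fin] using abs_sum_sub_sum_sq_le happrox (by positivity) hx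
  · simpa only [Fintype.card_fin, ge_iff_le] using
      sq_sub_le_sum happrox (by positivity) supernode_abs
        (supernode_monotoneOn hcurv.le ha hmono') hx.le

/-- Corollary 6 (first layer): summing `n` supernodes
`h(x,a) = (a²/σ''(τ))·(σ(x/a+τ) + σ(−x/a+τ) − 2σ(τ))` coordinatewise yields
`ĝ(x) = Σᵢ h(xᵢ,a)` which approximates `g(x) = Σᵢ xᵢ²` within `n·ν` wherever `g(x) ≤ 4R²`,
is non-negative everywhere, and is at least `4R² − n·ν` wherever `g(x) > 4R²`. -/
theorem stmt4 (n : ℕ) (σ σ' σ'' σ''' : ℝ → ℝ) (τ r M : ℝ) (hr : 0 < r) (hM : 0 < M)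
    (hder1 : ∀ x ∈ Set.Icc (τ - r) (τ + r), HasDerivAt σ (σ' x) x)
    (hder2 : ∀ x ∈ Set.Icc (τ - r) (τ + r), HasDerivAt σ' (σ'' x) x)
    (hder3 : ∀ x ∈ Set.Icc (τ - r) (τ + r), HasDerivAt σ'' (σ''' x) x)
    (hcurv : 0 < σ'' τ)
    (hbd3 : ∀ x ∈ Set.Icc (τ - r) (τ + r), |σ''' x| ≤ M)
    (hmono : ∀ x y : ℝ, 0 ≤ x → x ≤ y →
      σ (x + τ) + σ (-x + τ) ≤ σ (y + τ) + σ (-y + τ))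
    (h : ℝ → ℝ → ℝ)
    (hh : ∀ x b : ℝ, h x b = b ^ 2 / σ'' τ * (σ (x / b + τ) + σ (-x / b + τ) - 2 * σ τ))
    (R ν a : ℝ) (hR : 0 < R) (hν : 0 < ν)
    (ha1 : a ≥ 2 * R / r)
    (ha2 : a ≥ 8 * M * R ^ 3 / (3 * ν * σ'' τ))
    (ha3 : a ≥ 4 * M * R / (3 * σ'' τ))
    (g ghat : (Fin n → ℝ) → ℝ)
    (hg : ∀ x, g x = ∑ i, (x i) ^ 2)
    (hghat : ∀ x, ghat x = ∑ i, h (x i) a) :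
    (∀ x : Fin n → ℝ, 0 ≤ ghat x) ∧
    (∀ x : Fin n → ℝ, g x ≤ 4 * R ^ 2 → |ghat x - g x| ≤ n * ν) ∧
    (∀ x : Fin n → ℝ, g x > 4 * R ^ 2 → ghat x ≥ 4 * R ^ 2 - n * ν) :=
  stmt4_general n σ σ' σ'' σ''' τ r M hr hder1 hder2 hder3 hcurv hbd3 hmono h hh R ν a hR hν ha1 ha2
    g ghat hg hghat
end
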